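/- arXiv:1710.07748 — 3 statements merged into one kernel-verified Lean document; each statement's English description precedes it below -/
import Mathlib

section
/- Let G be a graph in 𝒢_3, let C be a cycle in G, and let u and v be distinct vertices of C that each have at least one neighbor in G outside of V(C). Then dist_C(u, v) ≡ 0 (mod 3). -/
open SimpleGraph

/-- `S` is the vertex set of a (not necessarily induced) path of order `k` in `G`,
i.e. a `k`-path of `G`. -/
def IsPathSupport {V : Type*} (k : ℕ) (G : SimpleGraph V) (S : Set V) : Prop :=
  ∃ (u v : V) (p : G.Walk u v), p.IsPath ∧ p.support.length = k ∧ S = {x | x ∈ p.support}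

/-- `X` is a `k`-vertex cover of `G`: every `k`-path of `G` contains a vertex of `X`. -/
def IsKVertexCover {V : Type*} (k : ℕ) (G : SimpleGraph V) (X : Finset V) : Prop :=
  ∀ S : Set V, IsPathSupport k G S → ∃ x ∈ X, x ∈ S

/-- The `k`-matching number `ν_k(G)`: the maximum number of pairwise disjoint
`k`-paths of `G`. -/
noncomputable def nuK {V : Type*} (k : ℕ) (G : SimpleGraph V) : ℕ :=
  sSup {n | ∃ M : Finset (Set V), (∀ S ∈ M, IsPathSupport k G S) ∧
    (↑M : Set (Set V)).Pairwise Disjoint ∧ M.card = n}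

/-- The `k`-vertex cover number `τ_k(G)`: the minimum cardinality of a `k`-vertex cover. -/
noncomputable def tauK {V : Type*} (k : ℕ) (G : SimpleGraph V) : ℕ :=
  sInf {n | ∃ X : Finset V, IsKVertexCover k G X ∧ X.card = n}

/-- `G` belongs to the class `𝒢_k`: `ν_k(H) = τ_k(H)` for every induced subgraph `H` of `G`. -/
def memGclass {V : Type*} (k : ℕ) (G : SimpleGraph V) : Prop :=
  ∀ s : Set V, nuK k (G.induce s) = tauK k (G.induce s)

/-- The cycle graph of order `n`, with vertex set `ZMod n` (for `n ≥ 3`). -/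
def cycleG (n : ℕ) : SimpleGraph (ZMod n) :=
  SimpleGraph.fromRel (fun x y => y = x + 1)

lemma cycleG_adj {n : ℕ} (x y : ZMod n) :
    (cycleG n).Adj x y ↔ x ≠ y ∧ (y = x + 1 ∨ x = y + 1) := by
  simp [cycleG, SimpleGraph.fromRel_adj]

lemma isPathSupport3_iff {V : Type*} (G : SimpleGraph V) (S : Set V) :
    IsPathSupport 3 G S ↔
      ∃ x y z : V, G.Adj x y ∧ G.Adj y z ∧ x ≠ z ∧ S = {x, y, z} := by
  constructor
  · rintro ⟨u, v, p, hp, hlen, rfl⟩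
    cases p with
    | nil => simp at hlen
    | cons h q =>
      cases q with
      | nil => simp at hlen
      | cons h' q' =>
        rename_i d _
        cases q' with
        | nil =>
          have hnd := hp.support_nodup
          simp [Walk.support_cons] at hnd
          refine ⟨u, d, v, h, h', hnd.1.2, ?_⟩
          ext w; simp [Set.mem_insert_iff]
        | cons h'' q'' => simp [Walk.support_cons] at hlen
  · rintro ⟨x, y, z, hxy, hyz, hxz, rfl⟩
    refine ⟨x, z, Walk.cons hxy (Walk.cons hyz Walk.nil), ?_, ?_, ?_⟩
    · rw [Walk.isPath_def]
      simp [Walk.support_cons, hxy.ne, hyz.ne, hxz]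
    · simp [Walk.support_cons]
    · ext w; simp [Set.mem_insert_iff]

lemma pathSupport_card3 {V : Type*} [Finite V] {G : SimpleGraph V} {S : Set V}
    (h : IsPathSupport 3 G S) : (Set.toFinite S).toFinset.card = 3 := by
  classical
  obtain ⟨x, y, z, hxy, hyz, hxz, rfl⟩ := (isPathSupport3_iff G S).mp h
  have : (Set.toFinite ({x, y, z} : Set V)).toFinset = {x, y, z} := by
    ext w; simp
  rw [this]
  rw [Finset.card_insert_of_notMem (by simp [hxy.ne, hxz]),
    Finset.card_insert_of_notMem (by simp [hyz.ne]), Finset.card_singleton]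

lemma nuK3_le {W : Type*} [Fintype W] (G : SimpleGraph W) :
    nuK 3 G ≤ Fintype.card W / 3 := by
  classical
  unfold nuK
  refine csSup_le ?_ ?_
  · exact ⟨0, ∅, by simp, by simp, rfl⟩
  rintro m ⟨M, hM, hdisj, rfl⟩
  rw [Nat.le_div_iff_mul_le (by norm_num)]
  have hinj : Set.InjOn (fun S => (Set.toFinite S).toFinset) (↑M : Set (Set W)) := by
    intro S hS T hT h
    have := congrArg (fun (F : Finset W) => (↑F : Set W)) h
    simpa [Set.Finite.coe_toFinset] using this
  set F : Finset (Finset W) := M.image (fun S => (Set.toFinite S).toFinset) with hF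
  have hcard : F.card = M.card := Finset.card_image_of_injOn hinj
  have hdisjF : ∀ A ∈ F, ∀ B ∈ F, A ≠ B → Disjoint (id A) (id B) := by
    intro A hA B hB hAB
    simp only [hF, Finset.mem_image] at hA hB
    obtain ⟨S, hS, rfl⟩ := hA
    obtain ⟨T, hT, rfl⟩ := hB
    have hST : S ≠ T := fun h => hAB (by rw [h])
    simp only [id]
    exact Set.Finite.disjoint_toFinset.mpr (hdisj hS hT hST)
  have h1 : (F.biUnion id).card = ∑ A ∈ F, A.card := Finset.card_biUnion hdisjF
  have h2 : ∑ A ∈ F, A.card = 3 * F.card := by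
    rw [Finset.sum_congr rfl (g := fun _ => 3) ?_, Finset.sum_const, smul_eq_mul, mul_comm]
    intro A hA
    simp only [hF, Finset.mem_image] at hA
    obtain ⟨S, hS, rfl⟩ := hA
    exact pathSupport_card3 (hM S hS)
  calc M.card * 3 = 3 * F.card := by rw [hcard, mul_comm]
    _ = (F.biUnion id).card := by rw [h1, h2]
    _ ≤ Fintype.card W := Finset.card_le_card (Finset.subset_univ _) |>.trans (by simp)

lemma tauK_exists {W : Type*} [Fintype W] (G : SimpleGraph W) :
    ∃ X : Finset W, IsKVertexCover 3 G X ∧ X.card = tauK 3 G := by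
  classical
  have hne : {n | ∃ X : Finset W, IsKVertexCover 3 G X ∧ X.card = n}.Nonempty := by
    refine ⟨(Finset.univ : Finset W).card, Finset.univ, ?_, rfl⟩
    rintro S ⟨u, v, p, hp, hlen, rfl⟩
    exact ⟨u, Finset.mem_univ u, p.start_mem_support⟩
  obtain ⟨X, hX, hcard⟩ := Nat.sInf_mem hne
  exact ⟨X, hX, hcard⟩

lemma zmod_one_ne_zero {n : ℕ} (hn : 2 ≤ n) : (1 : ZMod n) ≠ 0 := by
  haveI : NeZero n := ⟨by omega⟩
  intro h
  have h1 : ((1 : ℕ) : ZMod n).val = 1 := ZMod.val_cast_of_lt (by omega)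
  rw [Nat.cast_one, h, ZMod.val_zero] at h1
  exact one_ne_zero h1.symm

lemma cycleG_adj_succ {n : ℕ} (hn : 2 ≤ n) (x : ZMod n) : (cycleG n).Adj x (x + 1) := by
  rw [cycleG_adj]
  refine ⟨?_, Or.inl rfl⟩
  intro h
  exact zmod_one_ne_zero hn (by linear_combination h.symm - h.symm + (by rw [left_eq_add] at h; exact h : (1 : ZMod n) = 0))

lemma cycleG_walk {n : ℕ} (hn : 2 ≤ n) (i : ℕ) (x : ZMod n) :
    ∃ p : (cycleG n).Walk x (x + (i : ZMod n)), p.length = i := by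
  induction i generalizing x with
  | zero => exact ⟨(Walk.nil).copy rfl (by push_cast; ring), by simp⟩
  | succ i ih =>
    obtain ⟨p, hp⟩ := ih (x + 1)
    refine ⟨(Walk.cons (cycleG_adj_succ hn x) p).copy rfl (by push_cast; ring), by simp [hp]⟩

lemma cycleG_walk_decomp {n : ℕ} {x y : ZMod n} (p : (cycleG n).Walk x y) :
    ∃ s t : ℕ, s + t = p.length ∧ y - x = (s : ZMod n) - (t : ZMod n) := by
  induction p with
  | nil => exact ⟨0, 0, by simp, by simp⟩
  | @cons x c y h q ih =>
    obtain ⟨s, t, hst, hq⟩ := ih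
    rw [cycleG_adj] at h
    rcases h.2 with h1 | h1
    · refine ⟨s + 1, t, by simp [← hst]; ring, ?_⟩
      push_cast
      rw [h1] at hq
      linear_combination hq
    · refine ⟨s, t + 1, by simp [← hst]; ring, ?_⟩
      push_cast
      rw [h1]
      linear_combination hq

lemma cycleG_dist {n : ℕ} (hn : 3 ≤ n) (a b : ZMod n) :
    (cycleG n).dist a b = min (b - a).val (n - (b - a).val) := by
  haveI : NeZero n := ⟨by omega⟩
  set k := (b - a).val with hkdef
  have hk : k < n := ZMod.val_lt _
  have hcast : ((k : ℕ) : ZMod n) = b - a := ZMod.natCast_rightInverse (b - a)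
  have hub1 : (cycleG n).dist a b ≤ k := by
    obtain ⟨p, hp⟩ := cycleG_walk (by omega) k a
    have : a + ((k : ℕ) : ZMod n) = b := by rw [hcast]; ring
    have hle := SimpleGraph.dist_le (p.copy rfl this)
    rwa [Walk.length_copy, hp] at hle
  have hub2 : (cycleG n).dist a b ≤ n - k := by
    rw [SimpleGraph.dist_comm]
    obtain ⟨p, hp⟩ := cycleG_walk (by omega) (n - k) b
    have : b + ((n - k : ℕ) : ZMod n) = a := by
      rw [Nat.cast_sub hk.le, ZMod.natCast_self, hcast]; ring
    have hle := SimpleGraph.dist_le (p.copy rfl this)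
    rwa [Walk.length_copy, hp] at hle
  refine le_antisymm (le_min hub1 hub2) ?_
  by_contra hlt
  push_neg at hlt
  have hreach : (cycleG n).Reachable a b := by
    obtain ⟨p, _⟩ := cycleG_walk (by omega : 2 ≤ n) k a
    have : a + ((k : ℕ) : ZMod n) = b := by rw [hcast]; ring
    exact ⟨p.copy rfl this⟩
  obtain ⟨p, hp⟩ := hreach.exists_walk_length_eq_dist
  obtain ⟨s, t, hst, hdec⟩ := cycleG_walk_decomp p
  rw [hp] at hst
  have hcast2 : (s : ZMod n) = ((t + k : ℕ) : ZMod n) := by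
    push_cast
    rw [hcast]
    linear_combination -hdec
  have hmod : s ≡ t + k [MOD n] := (ZMod.natCast_eq_natCast_iff _ _ _).mp hcast2
  have hdvd : (n : ℤ) ∣ (t + k : ℕ) - (s : ℕ) := hmod.dvd
  have hs : s < k := by omega
  have ht : t < n - k := by omega
  have h0 : ((t + k : ℕ) : ℤ) - (s : ℕ) = 0 := by
    refine Int.eq_zero_of_abs_lt_dvd hdvd ?_
    rw [abs_of_nonneg (by push_cast; omega)]
    push_cast
    omega
  push_cast at h0
  omega

lemma zmod_ne_add_two {m : ℕ} (hm : 3 ≤ m) (i : ZMod m) : i ≠ i + 2 := by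
  haveI : NeZero m := ⟨by omega⟩
  intro h
  rw [left_eq_add] at h
  have h2 : ((2 : ℕ) : ZMod m).val = 2 := ZMod.val_cast_of_lt (by omega)
  rw [Nat.cast_ofNat, h, ZMod.val_zero] at h2
  omega

lemma cycle_mod_three {V : Type*} [Fintype V] (G : SimpleGraph V) (hG : memGclass 3 G)
    (m : ℕ) (hm : 3 ≤ m) (g : ZMod m → V) (hg : Function.Injective g)
    (hhom : ∀ i j, (cycleG m).Adj i j → G.Adj (g i) (g j)) : m % 3 = 0 := by
  classical
  haveI : NeZero m := ⟨by omega⟩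
  set s : Set V := Set.range g with hs
  haveI : Fintype ↥s := (Set.toFinite s).fintype
  have hcard : Fintype.card ↥s = m := by
    rw [← Fintype.card_congr (Equiv.ofInjective g hg), ZMod.card]
  set gg : ZMod m → ↥s := fun i => ⟨g i, Set.mem_range_self i⟩ with hgg
  have hadj : ∀ i j : ZMod m, (cycleG m).Adj i j → (G.induce s).Adj (gg i) (gg j) := by
    intro i j h
    exact SimpleGraph.comap_adj.mpr (hhom i j h)
  have htrip : ∀ i : ZMod m,
      IsPathSupport 3 (G.induce s) {gg i, gg (i + 1), gg (i + 2)} := by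
    intro i
    rw [isPathSupport3_iff]
    refine ⟨gg i, gg (i + 1), gg (i + 2), hadj _ _ (cycleG_adj_succ (by omega) i),
      ?_, ?_, rfl⟩
    · have := hadj _ _ (cycleG_adj_succ (by omega) (i + 1))
      rwa [show i + 1 + 1 = i + 2 by ring] at this
    · intro h
      exact zmod_ne_add_two hm i (hg (congrArg Subtype.val h))
  obtain ⟨X, hX, hXcard⟩ := tauK_exists (G.induce s)
  have hXle : X.card ≤ m / 3 := by
    rw [hXcard, ← hG s]
    exact (nuK3_le _).trans (by rw [hcard])
  have hchoice : ∀ i : ZMod m, ∃ x ∈ X, x ∈ ({gg i, gg (i + 1), gg (i + 2)} : Set ↥s) :=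
    fun i => hX _ (htrip i)
  choose F hF1 hF2 using hchoice
  have hcount : (Finset.univ : Finset (ZMod m)).card
      = ∑ x ∈ X, (Finset.univ.filter (fun i => F i = x)).card :=
    Finset.card_eq_sum_card_fiberwise (fun i _ => hF1 i)
  have hfib : ∀ x ∈ X, (Finset.univ.filter (fun i => F i = x)).card ≤ 3 := by
    intro x _
    obtain ⟨j, hj⟩ := x.2
    have hsub : Finset.univ.filter (fun i => F i = x) ⊆ {j, j - 1, j - 2} := by
      intro i hi
      rw [Finset.mem_filter] at hi
      have hmem := hF2 i
      rw [hi.2] at hmem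
      simp only [Set.mem_insert_iff, Set.mem_singleton_iff] at hmem
      have : ∀ t : ZMod m, x = gg (i + t) → i = j - t := by
        intro t ht
        have : g j = g (i + t) := by rw [hj]; exact congrArg Subtype.val ht
        have := hg this
        rw [this]; ring
      simp only [Finset.mem_insert, Finset.mem_singleton]
      rcases hmem with h | h | h
      · left; have := this 0 (by rwa [add_zero]); rw [this]; ring
      · right; left; exact this 1 h
      · right; right; exact this 2 h
    refine (Finset.card_le_card hsub).trans ?_
    refine (Finset.card_insert_le _ _).trans ?_
    have := Finset.card_insert_le (j - 1) ({j - 2} : Finset (ZMod m))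
    simp at this ⊢
    omega
  have hsum : ∑ x ∈ X, (Finset.univ.filter (fun i => F i = x)).card ≤ 3 * X.card := by
    calc ∑ x ∈ X, (Finset.univ.filter (fun i => F i = x)).card
        ≤ ∑ _x ∈ X, 3 := Finset.sum_le_sum hfib
      _ = 3 * X.card := by rw [Finset.sum_const, smul_eq_mul, mul_comm]
  have hm3 : m ≤ 3 * X.card := by
    have : (Finset.univ : Finset (ZMod m)).card = m := by rw [Finset.card_univ, ZMod.card]
    omega
  omega

lemma zmod_val_add_val_neg {n : ℕ} [NeZero n] {x : ZMod n} (hx : x ≠ 0) :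
    x.val + (-x).val = n := by
  have h1 : (x + -x).val = (x.val + (-x).val) % n := ZMod.val_add x (-x)
  rw [add_neg_cancel, ZMod.val_zero] at h1
  have h2 : x.val < n := ZMod.val_lt x
  have h3 : (-x).val < n := ZMod.val_lt _
  have h4 : x.val ≠ 0 := fun h => hx ((ZMod.val_eq_zero x).mp h)
  have h5 : (-x).val ≠ 0 := fun h => hx (by
    have := (ZMod.val_eq_zero (-x)).mp h
    rw [neg_eq_zero] at this
    exact this)
  have hsum : (x.val + (-x).val) % n = 0 := h1.symm
  rcases Nat.lt_or_ge (x.val + (-x).val) n with h | h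
  · rw [Nat.mod_eq_of_lt h] at hsum; omega
  · rw [Nat.mod_eq_sub_mod h, Nat.mod_eq_of_lt (by omega)] at hsum; omega

lemma arc_w {V : Type*} [Fintype V] (G : SimpleGraph V) (hG : memGclass 3 G)
    (n : ℕ) (hn : 3 ≤ n) (f : ZMod n → V) (hinj : Function.Injective f)
    (hhom : ∀ i j : ZMod n, (cycleG n).Adj i j → G.Adj (f i) (f j))
    (a b : ZMod n) (hab : a ≠ b) (w : V) (hw : w ∉ Set.range f)
    (hwa : G.Adj w (f a)) (hwb : G.Adj (f b) w) : ((b - a).val + 2) % 3 = 0 := by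
  haveI : NeZero n := ⟨by omega⟩
  set k := (b - a).val with hkdef
  have hcast : ((k : ℕ) : ZMod n) = b - a := ZMod.natCast_rightInverse (b - a)
  have hk1 : k ≠ 0 := fun h => hab (by
    have := (ZMod.val_eq_zero (b - a)).mp h
    rw [sub_eq_zero] at this
    exact this.symm)
  have hk2 : k < n := ZMod.val_lt _
  set m := k + 2 with hmdef
  haveI : NeZero m := ⟨by omega⟩
  haveI : Fact (1 < m) := ⟨by omega⟩
  set g : ZMod m → V := fun i => if i.val ≤ k then f (a + (i.val : ZMod n)) else w
    with hgdef
  have hgval : ∀ i : ZMod m, i.val ≤ k → g i = f (a + (i.val : ZMod n)) := by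
    intro i hi; simp only [hgdef, if_pos hi]
  have hgw : ∀ i : ZMod m, ¬ i.val ≤ k → g i = w := by
    intro i hi; simp only [hgdef, if_neg hi]
  have hginj : Function.Injective g := by
    intro i j hij
    by_cases hi : i.val ≤ k <;> by_cases hj : j.val ≤ k
    · rw [hgval i hi, hgval j hj] at hij
      have := hinj hij
      have hvv : ((i.val : ℕ) : ZMod n) = ((j.val : ℕ) : ZMod n) := by
        have := add_left_cancel this
        exact this
      have : i.val = j.val := by
        have h1 := ZMod.val_cast_of_lt (lt_of_le_of_lt hi hk2)
        have h2 := ZMod.val_cast_of_lt (lt_of_le_of_lt hj hk2)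
        rw [← h1, ← h2, hvv]
      exact ZMod.val_injective m this
    · rw [hgval i hi, hgw j hj] at hij
      exact absurd ⟨_, hij⟩ hw
    · rw [hgw i hi, hgval j hj] at hij
      exact absurd ⟨_, hij.symm⟩ hw
    · have h1 : i.val < m := ZMod.val_lt i
      have h2 : j.val < m := ZMod.val_lt j
      have : i.val = j.val := by omega
      exact ZMod.val_injective m this
  have hkey : ∀ i : ZMod m, G.Adj (g i) (g (i + 1)) := by
    intro i
    have hiv : i.val < m := ZMod.val_lt i
    have hadd : (i + 1).val = (i.val + 1) % m := by
      rw [ZMod.val_add, ZMod.val_one]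
    rcases lt_trichotomy i.val k with h | h | h
    · have hsv : (i + 1).val = i.val + 1 := by
        rw [hadd]; exact Nat.mod_eq_of_lt (by omega)
      rw [hgval i (le_of_lt h), hgval (i + 1) (by omega)]
      have heq : a + (((i + 1).val : ℕ) : ZMod n) = (a + (i.val : ZMod n)) + 1 := by
        rw [hsv]; push_cast; ring
      rw [heq]
      exact hhom _ _ (cycleG_adj_succ (by omega) _)
    · have hsv : (i + 1).val = k + 1 := by
        rw [hadd, h]; exact Nat.mod_eq_of_lt (by omega)
      rw [hgval i (le_of_eq h), hgw (i + 1) (by omega)]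
      rw [h, hcast, show a + (b - a) = b by ring]
      exact hwb
    · have hik : i.val = k + 1 := by omega
      have hsv : (i + 1).val = 0 := by
        rw [hadd, hik, show k + 1 + 1 = m by omega, Nat.mod_self]
      rw [hgw i (by omega), hgval (i + 1) (by omega), hsv]
      rw [show a + ((0 : ℕ) : ZMod n) = a by push_cast; ring]
      exact hwa
  have hghom : ∀ i j : ZMod m, (cycleG m).Adj i j → G.Adj (g i) (g j) := by
    intro i j hij
    rw [cycleG_adj] at hij
    rcases hij.2 with h | h
    · rw [h]; exact hkey i
    · rw [h]; exact (hkey j).symm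
  exact cycle_mod_three G hG m (by omega) g hginj hghom

lemma pendants_force {V : Type*} [Fintype V] (G : SimpleGraph V) (hG : memGclass 3 G)
    (n : ℕ) (hn : 3 ≤ n) (hn3 : n % 3 = 0) (f : ZMod n → V) (hinj : Function.Injective f)
    (hhom : ∀ i j : ZMod n, (cycleG n).Adj i j → G.Adj (f i) (f j))
    (a b : ZMod n) (u' v' : V) (hu' : u' ∉ Set.range f) (hv' : v' ∉ Set.range f)
    (huv : u' ≠ v') (hua : G.Adj (f a) u') (hvb : G.Adj (f b) v') :
    (b - a).val % 3 = 0 := by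
  classical
  haveI : NeZero n := ⟨by omega⟩
  set s : Set V := insert u' (insert v' (Set.range f)) with hs
  haveI : Fintype ↥s := (Set.toFinite s).fintype
  have hcards : Fintype.card ↥s = n + 2 := by
    rw [← Nat.card_eq_fintype_card, Nat.card_coe_set_eq, hs]
    rw [Set.ncard_insert_of_notMem (by
        simp only [Set.mem_insert_iff]
        push_neg
        exact ⟨huv, hu'⟩) ((Set.range f).toFinite.insert v'),
      Set.ncard_insert_of_notMem hv' (Set.range f).toFinite]
    have : (Set.range f).ncard = n := by
      rw [← Nat.card_coe_set_eq, Nat.card_congr (Equiv.ofInjective f hinj).symm,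
        Nat.card_eq_fintype_card, ZMod.card]
    omega
  have hmemf : ∀ i : ZMod n, f i ∈ s := fun i => by
    simp only [hs, Set.mem_insert_iff]
    exact Or.inr (Or.inr (Set.mem_range_self i))
  set gg : ZMod n → ↥s := fun i => ⟨f i, hmemf i⟩ with hgg
  set uu : ↥s := ⟨u', by simp [hs]⟩ with huu
  set vv : ↥s := ⟨v', by simp [hs]⟩ with hvv
  have hgginj : Function.Injective gg := fun i j h =>
    hinj (congrArg Subtype.val h)
  have hadj : ∀ i j : ZMod n, (cycleG n).Adj i j → (G.induce s).Adj (gg i) (gg j) :=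
    fun i j h => SimpleGraph.comap_adj.mpr (hhom i j h)
  have htrip : ∀ i : ZMod n,
      IsPathSupport 3 (G.induce s) {gg i, gg (i + 1), gg (i + 2)} := by
    intro i
    rw [isPathSupport3_iff]
    refine ⟨gg i, gg (i + 1), gg (i + 2), hadj _ _ (cycleG_adj_succ (by omega) i),
      ?_, ?_, rfl⟩
    · have := hadj _ _ (cycleG_adj_succ (by omega) (i + 1))
      rwa [show i + 1 + 1 = i + 2 by ring] at this
    · intro h
      exact zmod_ne_add_two hn i (hgginj h)
  obtain ⟨X, hX, hXcard⟩ := tauK_exists (G.induce s)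
  have hXle : X.card ≤ n / 3 := by
    rw [hXcard, ← hG s]
    refine (nuK3_le _).trans ?_
    rw [hcards]
    omega
  have hchoice : ∀ i : ZMod n, ∃ x ∈ X, x ∈ ({gg i, gg (i + 1), gg (i + 2)} : Set ↥s) :=
    fun i => hX _ (htrip i)
  choose F hF1 hF2 using hchoice
  have hcount : (Finset.univ : Finset (ZMod n)).card
      = ∑ x ∈ X, (Finset.univ.filter (fun i => F i = x)).card :=
    Finset.card_eq_sum_card_fiberwise (fun i _ => hF1 i)
  have huniv : (Finset.univ : Finset (ZMod n)).card = n := by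
    rw [Finset.card_univ, ZMod.card]
  have hsub : ∀ (x : ↥s) (j : ZMod n), (x : V) = f j →
      Finset.univ.filter (fun i => F i = x) ⊆ {j, j - 1, j - 2} := by
    intro x j hj i hi
    rw [Finset.mem_filter] at hi
    have hmem := hF2 i
    rw [hi.2] at hmem
    simp only [Set.mem_insert_iff, Set.mem_singleton_iff] at hmem
    have key : ∀ t : ZMod n, x = gg (i + t) → i = j - t := by
      intro t ht
      have : f j = f (i + t) := by rw [← hj]; exact congrArg Subtype.val ht
      have := hinj this
      rw [this]; ring
    simp only [Finset.mem_insert, Finset.mem_singleton]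
    rcases hmem with h | h | h
    · left; have := key 0 (by rwa [add_zero]); rw [this]; ring
    · right; left; exact key 1 h
    · right; right; exact key 2 h
  have hcard3 : ∀ j : ZMod n, ({j, j - 1, j - 2} : Finset (ZMod n)).card ≤ 3 := by
    intro j
    refine (Finset.card_insert_le _ _).trans ?_
    have := Finset.card_insert_le (j - 1) ({j - 2} : Finset (ZMod n))
    simp at this ⊢
    omega
  have hfib3 : ∀ x ∈ X, (Finset.univ.filter (fun i => F i = x)).card ≤ 3 := by
    intro x _
    by_cases hxr : (x : V) ∈ Set.range f
    · obtain ⟨j, hj⟩ := hxr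
      exact (Finset.card_le_card (hsub x j hj.symm)).trans (hcard3 j)
    · have : Finset.univ.filter (fun i => F i = x) = ∅ := by
        rw [Finset.eq_empty_iff_forall_notMem]
        intro i hi
        rw [Finset.mem_filter] at hi
        have hmem := hF2 i
        rw [hi.2] at hmem
        simp only [Set.mem_insert_iff, Set.mem_singleton_iff] at hmem
        rcases hmem with h | h | h <;>
          exact hxr ⟨_, (congrArg Subtype.val h).symm⟩
      rw [this]
      simp
  have hXn : 3 * X.card = n := by
    have h1 : n ≤ 3 * X.card := by
      have : ∑ x ∈ X, (Finset.univ.filter (fun i => F i = x)).card ≤ 3 * X.card := by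
        calc ∑ x ∈ X, (Finset.univ.filter (fun i => F i = x)).card
            ≤ ∑ _x ∈ X, 3 := Finset.sum_le_sum hfib3
          _ = 3 * X.card := by rw [Finset.sum_const, smul_eq_mul, mul_comm]
      omega
    omega
  have hallfib : ∀ x ∈ X, (Finset.univ.filter (fun i => F i = x)).card = 3 := by
    by_contra hcon
    push_neg at hcon
    obtain ⟨x₀, hx₀, hx₀ne⟩ := hcon
    have hstrict : ∑ x ∈ X, (Finset.univ.filter (fun i => F i = x)).card
        < ∑ _x ∈ X, 3 :=
      Finset.sum_lt_sum hfib3 ⟨x₀, hx₀, lt_of_le_of_ne (hfib3 x₀ hx₀) hx₀ne⟩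
    rw [Finset.sum_const, smul_eq_mul, mul_comm] at hstrict
    omega
  -- every element of the cover is a cycle vertex whose fiber is the full triple
  have hform : ∀ x ∈ X, ∃ j : ZMod n, gg j = x ∧ F j = x ∧ F (j - 1) = x ∧ F (j - 2) = x := by
    intro x hx
    have h3 := hallfib x hx
    have hne : (Finset.univ.filter (fun i => F i = x)).Nonempty := by
      rw [← Finset.card_pos, h3]; omega
    obtain ⟨i, hi⟩ := hne
    rw [Finset.mem_filter] at hi
    have hmem := hF2 i
    rw [hi.2] at hmem
    simp only [Set.mem_insert_iff, Set.mem_singleton_iff] at hmem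
    have : ∃ j : ZMod n, x = gg j := by
      rcases hmem with h | h | h
      exacts [⟨i, h⟩, ⟨i + 1, h⟩, ⟨i + 2, h⟩]
    obtain ⟨j, hj⟩ := this
    have hfull : Finset.univ.filter (fun i => F i = x) = ({j, j - 1, j - 2} : Finset (ZMod n)) :=
      Finset.eq_of_subset_of_card_le (hsub x j (by rw [hj])) (by rw [h3]; exact hcard3 j)
    have hmemj : ∀ t ∈ ({j, j - 1, j - 2} : Finset (ZMod n)), F t = x := by
      intro t ht
      have : t ∈ Finset.univ.filter (fun i => F i = x) := by rw [hfull]; exact ht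
      exact (Finset.mem_filter.mp this).2
    exact ⟨j, hj.symm, hmemj j (by simp), hmemj (j - 1) (by simp), hmemj (j - 2) (by simp)⟩
  -- step: the cover is closed under adding 3
  have hstep : ∀ j : ZMod n, gg j ∈ X → gg (j + 3) ∈ X := by
    intro j hj
    obtain ⟨j₁, hj₁, hFj, hFj1, hFj2⟩ := hform (gg j) hj
    have hj₁j : j₁ = j := hgginj hj₁
    subst hj₁j
    have hx' : F (j₁ + 1) ∈ X := hF1 _
    obtain ⟨j', hj', hFj', hFj'1, hFj'2⟩ := hform (F (j₁ + 1)) hx'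
    have hmem := hF2 (j₁ + 1)
    simp only [Set.mem_insert_iff, Set.mem_singleton_iff] at hmem
    have h1ne : (1 : ZMod n) ≠ 0 := zmod_one_ne_zero (by omega)
    rcases hmem with h | h | h
    · exfalso
      have hj'eq : j' = j₁ + 1 := hgginj (hj'.trans h)
      have h1 : F (j' - 1) = gg (j₁ + 1) := hFj'1.trans h
      rw [hj'eq, add_sub_cancel_right, hFj] at h1
      have := hgginj h1
      rw [left_eq_add] at this
      exact h1ne this
    · exfalso
      rw [show j₁ + 1 + 1 = j₁ + 2 by ring] at h
      have hj'eq : j' = j₁ + 2 := hgginj (hj'.trans h)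
      have h1 : F (j' - 2) = gg (j₁ + 2) := hFj'2.trans h
      rw [hj'eq, add_sub_cancel_right, hFj] at h1
      exact zmod_ne_add_two hn j₁ (hgginj h1)
    · rw [show j₁ + 1 + 2 = j₁ + 3 by ring] at h
      rw [← h]
      exact hx'
  -- a starting point
  have hbase : ∃ j₀ : ZMod n, gg j₀ ∈ X := by
    obtain ⟨j, hjgg, _, _, _⟩ := hform (F 0) (hF1 0)
    exact ⟨j, by rw [hjgg]; exact hF1 0⟩
  obtain ⟨j₀, hj₀⟩ := hbase
  have hclosure : ∀ t : ℕ, gg (j₀ + ((3 * t : ℕ) : ZMod n)) ∈ X := by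
    intro t
    induction t with
    | zero => simpa using hj₀
    | succ t ih =>
      have := hstep _ ih
      rwa [show j₀ + ((3 * t : ℕ) : ZMod n) + 3
        = j₀ + ((3 * (t + 1) : ℕ) : ZMod n) by push_cast; ring] at this
  set A : Finset ↥s :=
    (Finset.range (n / 3)).image (fun t => gg (j₀ + ((3 * t : ℕ) : ZMod n))) with hA
  have hAsub : A ⊆ X := by
    intro x hx
    rw [hA, Finset.mem_image] at hx
    obtain ⟨t, _, rfl⟩ := hx
    exact hclosure t
  have hAcard : A.card = n / 3 := by
    rw [hA, Finset.card_image_of_injOn, Finset.card_range]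
    intro t₁ h₁ t₂ h₂ he
    rw [Finset.mem_coe, Finset.mem_range] at h₁ h₂
    have hadd := hgginj he
    have hc : ((3 * t₁ : ℕ) : ZMod n) = ((3 * t₂ : ℕ) : ZMod n) := add_left_cancel hadd
    have hv : (3 * t₁) = (3 * t₂) := by
      have e1 := ZMod.val_cast_of_lt (show 3 * t₁ < n by omega)
      have e2 := ZMod.val_cast_of_lt (show 3 * t₂ < n by omega)
      rw [← e1, ← e2, hc]
    omega
  have hXA : X = A :=
    (Finset.eq_of_subset_of_card_le hAsub (by rw [hAcard]; exact hXle)).symm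
  have hdvd3 : 3 ∣ n := by omega
  set π := ZMod.castHom hdvd3 (ZMod 3) with hπdef
  have h30 : (3 : ZMod 3) = 0 := by decide
  have hπ3 : ∀ t : ℕ, π ((3 * t : ℕ) : ZMod n) = 0 := by
    intro t
    rw [map_natCast, Nat.cast_mul, Nat.cast_ofNat, h30, zero_mul]
  have hmemX : ∀ j : ZMod n, gg j ∈ X → π j = π j₀ := by
    intro j hj
    rw [hXA, hA, Finset.mem_image] at hj
    obtain ⟨t, _, he⟩ := hj
    have he2 := hgginj he
    rw [← he2, map_add, hπ3 t, add_zero]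
  have hXnotout : ∀ (w : V), w ∉ Set.range f → ∀ x ∈ X, (x : V) ≠ w := by
    intro w hwr x hx hxw
    rw [hXA, hA, Finset.mem_image] at hx
    obtain ⟨t, _, he⟩ := hx
    exact hwr ⟨_, by rw [← he] at hxw; exact hxw⟩
  have hpend : ∀ (c : ZMod n) (w : V), w ∈ s → w ∉ Set.range f → G.Adj (f c) w →
      π c = π j₀ := by
    intro c w hwmem hwr hcw
    set ww : ↥s := ⟨w, hwmem⟩ with hww
    have path1 : IsPathSupport 3 (G.induce s) {ww, gg c, gg (c + 1)} := by
      rw [isPathSupport3_iff]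
      refine ⟨ww, gg c, gg (c + 1), SimpleGraph.comap_adj.mpr hcw.symm,
        hadj _ _ (cycleG_adj_succ (by omega) c), ?_, rfl⟩
      exact fun h => hwr ⟨c + 1, (congrArg Subtype.val h).symm⟩
    have path2 : IsPathSupport 3 (G.induce s) {ww, gg c, gg (c - 1)} := by
      rw [isPathSupport3_iff]
      refine ⟨ww, gg c, gg (c - 1), SimpleGraph.comap_adj.mpr hcw.symm, ?_, ?_, rfl⟩
      · refine hadj _ _ ?_
        rw [cycleG_adj]
        refine ⟨?_, Or.inr (by ring)⟩
        intro h
        exact zmod_one_ne_zero (show 2 ≤ n by omega) (by linear_combination h)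
      · exact fun h => hwr ⟨c - 1, (congrArg Subtype.val h).symm⟩
    have hc_or : π c = π j₀ ∨ π (c + 1) = π j₀ := by
      obtain ⟨x1, hx1X, hx1⟩ := hX _ path1
      simp only [Set.mem_insert_iff, Set.mem_singleton_iff] at hx1
      rcases hx1 with h | h | h
      · exact absurd (congrArg Subtype.val h) (hXnotout w hwr x1 hx1X)
      · exact Or.inl (hmemX c (h ▸ hx1X))
      · exact Or.inr (hmemX (c + 1) (h ▸ hx1X))
    have hc_or2 : π c = π j₀ ∨ π (c - 1) = π j₀ := by
      obtain ⟨x2, hx2X, hx2⟩ := hX _ path2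
      simp only [Set.mem_insert_iff, Set.mem_singleton_iff] at hx2
      rcases hx2 with h | h | h
      · exact absurd (congrArg Subtype.val h) (hXnotout w hwr x2 hx2X)
      · exact Or.inl (hmemX c (h ▸ hx2X))
      · exact Or.inr (hmemX (c - 1) (h ▸ hx2X))
    rcases hc_or with h | h
    · exact h
    rcases hc_or2 with h2 | h2
    · exact h2
    exfalso
    have e1 : π c + 1 = π j₀ := by rw [← h, map_add, map_one]
    have e2 : π c - 1 = π j₀ := by rw [← h2, map_sub, map_one]
    have : (2 : ZMod 3) = 0 := by linear_combination e1 - e2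
    exact (by decide : (2 : ZMod 3) ≠ 0) this
  have hπa : π a = π j₀ := hpend a u' (by simp [hs]) hu' hua
  have hπb : π b = π j₀ := hpend b v' (by simp [hs]) hv' hvb
  have hdiff : π (b - a) = 0 := by rw [map_sub, hπa, hπb, sub_self]
  have hcastk : (((b - a).val : ℕ) : ZMod n) = b - a := ZMod.natCast_rightInverse (b - a)
  rw [← hcastk, map_natCast] at hdiff
  have := (ZMod.natCast_eq_zero_iff (b - a).val 3).mp hdiff
  omega

/-- If `G ∈ 𝒢₃`, `C` is a cycle in `G` (here given as an injective homomorphic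
copy `f` of the cycle of order `n`), and `u = f a` and `v = f b` are distinct
vertices of `C` having neighbors outside of `V(C)`, then `dist_C(u,v) ≡ 0 (mod 3)`. -/
theorem stmt5 {V : Type*} [Fintype V] (G : SimpleGraph V) (hG : memGclass 3 G)
    (n : ℕ) (hn : 3 ≤ n) (f : ZMod n → V) (hinj : Function.Injective f)
    (hhom : ∀ a b : ZMod n, (cycleG n).Adj a b → G.Adj (f a) (f b))
    (a b : ZMod n) (hab : a ≠ b)
    (ha : ∃ u', u' ∉ Set.range f ∧ G.Adj (f a) u')
    (hb : ∃ v', v' ∉ Set.range f ∧ G.Adj (f b) v') :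
    (cycleG n).dist a b % 3 = 0 := by
  haveI : NeZero n := ⟨by omega⟩
  obtain ⟨u', hu', hua⟩ := ha
  obtain ⟨v', hv', hvb⟩ := hb
  have hn3 : n % 3 = 0 := cycle_mod_three G hG n hn f hinj hhom
  have hkn : (b - a).val < n := ZMod.val_lt _
  have hknk : (b - a).val + (a - b).val = n := by
    have := zmod_val_add_val_neg (x := b - a) (sub_ne_zero.mpr (Ne.symm hab))
    rwa [neg_sub] at this
  have h3k : (b - a).val % 3 = 0 := by
    by_cases huv : u' = v'
    · exfalso
      subst huv
      have h1 := arc_w G hG n hn f hinj hhom a b hab u' hu' hua.symm hvb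
      have h2 := arc_w G hG n hn f hinj hhom b a (Ne.symm hab) u' hu' hvb.symm hua
      omega
    · exact pendants_force G hG n hn hn3 f hinj hhom a b u' v' hu' hv' huv hua hvb
  rw [cycleG_dist hn a b]
  have hnk3 : (n - (b - a).val) % 3 = 0 := by omega
  rcases le_total ((b - a).val) (n - (b - a).val) with h | h
  · rw [min_eq_left h]; exact h3k
  · rw [min_eq_right h]; exact hnk3
end

section
/- Let k be a positive integer and let G be a graph of order n ≥ max(k, 3) that contains a Hamiltonian cycle. Then ν_k(G) = ⌊n/k⌋ and τ_k(G) ≥ ⌈n/k⌉. -/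
open SimpleGraph

/-! A Hamiltonian cycle labels the vertices by `ZMod n` so that consecutive labels are adjacent,
and any `k ≤ n` cyclically consecutive labels span a `k`-path. The `⌊n/k⌋` windows starting at
multiples of `k` are disjoint, and no more fit since every `k`-path has `k` vertices. A `k`-vertex
cover meets all `n` windows while each vertex lies in only `k` of them, so it has at least
`⌈n/k⌉` vertices. -/

open Function Finset

section Paths

variable {V : Type*} {G : SimpleGraph V} {k : ℕ}

lemma isPathSupport_of_isChain {l : List V} (hne : l ≠ []) (hchain : l.IsChain G.Adj)
    (hnd : l.Nodup) : IsPathSupport l.length G {x | x ∈ l} := by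
  refine ⟨_, _, Walk.ofSupport l hne hchain, ?_, ?_, ?_⟩ <;>
    simp only [Walk.isPath_def, Walk.support_ofSupport, hnd]

lemma isPathSupport_image_Iio {g : ℕ → V} (hk : 0 < k)
    (hadj : ∀ d, d + 1 < k → G.Adj (g d) (g (d + 1))) (hinj : Set.InjOn g (Set.Iio k)) :
    IsPathSupport k G (g '' Set.Iio k) := by
  have hne : (List.range k).map g ≠ [] := by simp; omega
  have hchain : ((List.range k).map g).IsChain G.Adj := by
    obtain ⟨k, rfl⟩ := Nat.exists_eq_add_of_lt hk
    rw [List.isChain_map, zero_add, List.isChain_range_succ]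
    exact fun d hd => hadj d (by omega)
  have hnd : ((List.range k).map g).Nodup :=
    List.nodup_range.map_on fun a ha b hb => hinj (by simpa using ha) (by simpa using hb)
  convert isPathSupport_of_isChain hne hchain hnd using 1
  · simp
  · ext; simp

lemma IsPathSupport.ncard_eq {S : Set V} (hS : IsPathSupport k G S) : S.ncard = k := by
  classical
  obtain ⟨u, v, p, hp, rfl, rfl⟩ := hS
  rw [← List.toFinset_card_of_nodup hp.support_nodup, ← Set.ncard_coe_finset, List.coe_toFinset]

lemma card_mul_le_card_of_pairwise_disjoint [Finite V] {M : Finset (Set V)}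
    (hM : ∀ S ∈ M, IsPathSupport k G S) (hdisj : (M : Set (Set V)).Pairwise Disjoint) :
    M.card * k ≤ Nat.card V :=
  calc M.card * k = ∑ S ∈ M, S.ncard := by
        rw [Finset.sum_congr rfl fun S hS => (hM S hS).ncard_eq, sum_const, smul_eq_mul]
    _ = (⋃ S ∈ (M : Set (Set V)), S).ncard := by
        rw [(M.finite_toSet).ncard_biUnion (fun _ _ => Set.toFinite _) hdisj,
          finsum_mem_coe_finset]
    _ ≤ Nat.card V := Set.ncard_le_card _

end Paths

section MatchingNumber

variable {V : Type*} [Finite V] {G : SimpleGraph V} {k : ℕ}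

lemma nuK_le_card_div (hk : 0 < k) : nuK k G ≤ Nat.card V / k := by
  refine csSup_le' ?_
  rintro _ ⟨M, hM, hdisj, rfl⟩
  exact (Nat.le_div_iff_mul_le hk).2 (card_mul_le_card_of_pairwise_disjoint hM hdisj)

lemma card_le_nuK (hk : 0 < k) {M : Finset (Set V)} (hM : ∀ S ∈ M, IsPathSupport k G S)
    (hdisj : (M : Set (Set V)).Pairwise Disjoint) : M.card ≤ nuK k G := by
  refine le_csSup ⟨Nat.card V / k, ?_⟩ ⟨M, hM, hdisj, rfl⟩
  rintro _ ⟨M, hM, hdisj, rfl⟩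
  exact (Nat.le_div_iff_mul_le hk).2 (card_mul_le_card_of_pairwise_disjoint hM hdisj)

end MatchingNumber

lemma isKVertexCover_univ {V : Type*} [Fintype V] (k : ℕ) (G : SimpleGraph V) :
    IsKVertexCover k G Finset.univ := by
  rintro _ ⟨u, v, p, -, -, rfl⟩
  exact ⟨u, mem_univ u, p.start_mem_support⟩

lemma le_tauK {V : Type*} [Fintype V] {k m : ℕ} {G : SimpleGraph V}
    (h : ∀ X, IsKVertexCover k G X → m ≤ X.card) : m ≤ tauK k G :=
  le_csInf ⟨_, _, isKVertexCover_univ k G, rfl⟩ fun _ ⟨X, hX, hcard⟩ => hcard ▸ h X hX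

lemma card_le_mul_card_of_forall_exists_mem {ι V : Type*} [Fintype ι] {k : ℕ}
    {σ : ℕ → ι → V} (hσ : ∀ d, Injective (σ d)) {X : Finset V}
    (hX : ∀ j, ∃ d < k, σ d j ∈ X) : Fintype.card ι ≤ k * X.card := by
  classical
  calc Fintype.card ι = (univ : Finset ι).card := card_univ.symm
    _ ≤ ((range k).biUnion fun d => {j | σ d j ∈ X}).card := by
        refine card_le_card fun j _ => ?_
        obtain ⟨d, hd, hdX⟩ := hX j
        simpa using ⟨d, hd, hdX⟩
    _ ≤ ∑ d ∈ range k, ({j | σ d j ∈ X} : Finset ι).card := card_biUnion_le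
    _ ≤ ∑ _d ∈ range k, X.card :=
        sum_le_sum fun d _ => card_le_card_of_injOn (σ d) (fun j hj => by simpa using hj)
          (hσ d).injOn
    _ = k * X.card := by simp

lemma ZMod.natCast_injOn_Iio (n : ℕ) : Set.InjOn (Nat.cast : ℕ → ZMod n) (Set.Iio n) :=
  fun a ha b hb h => by
    simpa [Nat.mod_eq_of_lt ha, Nat.mod_eq_of_lt hb] using (ZMod.natCast_eq_natCast_iff' a b n).1 h

section CyclicLabeling

variable {V : Type*} {G : SimpleGraph V} {n k : ℕ} {f : ZMod n → V}

def cyclicWindow (f : ZMod n → V) (k : ℕ) (j : ZMod n) : Set V :=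
  (fun d : ℕ => f (j + d)) '' Set.Iio k

lemma isPathSupport_cyclicWindow (hf : Injective f) (hadj : ∀ i, G.Adj (f i) (f (i + 1)))
    (hk : 0 < k) (hkn : k ≤ n) (j : ZMod n) : IsPathSupport k G (cyclicWindow f k j) :=
  isPathSupport_image_Iio hk (fun d _ => by simpa [add_assoc] using hadj (j + d))
    fun _ ha _ hb h => ZMod.natCast_injOn_Iio n (lt_of_lt_of_le ha hkn) (lt_of_lt_of_le hb hkn)
      (add_left_cancel (hf h))

lemma disjoint_cyclicWindow_mul (hf : Injective f) {i i' : ℕ} (hi : i < n / k)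
    (hi' : i' < n / k) (hne : i ≠ i') :
    Disjoint (cyclicWindow f k (i * k : ℕ)) (cyclicWindow f k (i' * k : ℕ)) := by
  have hk : 0 < k := Nat.pos_of_ne_zero (by rintro rfl; simp at hi)
  have hlt : ∀ {i d}, i < n / k → d < k → i * k + d < n := fun {i d} hi hd =>
    calc i * k + d < (i + 1) * k := by rw [add_mul, one_mul]; omega
      _ ≤ n / k * k := Nat.mul_le_mul_right k hi
      _ ≤ n := Nat.div_mul_le_self n k
  have hdiv : ∀ {i d}, d < k → (i * k + d) / k = i := fun {i d} hd => by
    rw [add_comm, Nat.add_mul_div_right _ _ hk, Nat.div_eq_of_lt hd, zero_add]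
  rw [Set.disjoint_left]
  rintro _ ⟨d, hd, rfl⟩ ⟨d', hd', h⟩
  have heq : i' * k + d' = i * k + d :=
    ZMod.natCast_injOn_Iio n (hlt hi' hd') (hlt hi hd) <| by
      rw [Nat.cast_add, Nat.cast_add]
      exact hf h
  exact hne (by rw [← hdiv (i := i) hd, ← heq, hdiv hd'])

lemma div_le_nuK_of_cyclic [Finite V] (hf : Injective f)
    (hadj : ∀ i, G.Adj (f i) (f (i + 1))) (hk : 0 < k) (hkn : k ≤ n) : n / k ≤ nuK k G := by
  classical
  set W : ℕ → Set V := fun i => cyclicWindow f k (i * k : ℕ)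
  have hW : Set.InjOn W (Set.Iio (n / k)) := fun i hi i' hi' h => by
    by_contra hne
    have : Disjoint (W i) (W i') := disjoint_cyclicWindow_mul hf hi hi' hne
    rw [← h, disjoint_self] at this
    exact (Set.Nonempty.image _ ⟨0, hk⟩).ne_empty this
  calc n / k = ((range (n / k)).image W).card := by
        rw [card_image_of_injOn (by simpa using hW), card_range]
    _ ≤ nuK k G := by
      refine card_le_nuK hk ?_ ?_
      · simp only [mem_image, mem_range]
        rintro _ ⟨i, -, rfl⟩
        exact isPathSupport_cyclicWindow hf hadj hk hkn _
      · rw [coe_image, coe_range, hW.pairwise_image]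
        exact fun i hi i' hi' hne => disjoint_cyclicWindow_mul hf hi hi' hne

lemma card_le_mul_card_of_isKVertexCover [NeZero n] (hf : Injective f)
    (hadj : ∀ i, G.Adj (f i) (f (i + 1))) (hk : 0 < k) (hkn : k ≤ n) {X : Finset V}
    (hX : IsKVertexCover k G X) : n ≤ k * X.card := by
  simpa using card_le_mul_card_of_forall_exists_mem (σ := fun (d : ℕ) j => f (j + d))
    (fun d => hf.comp (add_left_injective _)) fun j => by
      obtain ⟨x, hxX, d, hd, rfl⟩ := hX _ (isPathSupport_cyclicWindow hf hadj hk hkn j)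
      exact ⟨d, hd, hxX⟩

end CyclicLabeling

lemma SimpleGraph.Walk.IsHamiltonianCycle.exists_cyclic_labeling {V : Type*} [Fintype V]
    [DecidableEq V] {G : SimpleGraph V} {u : V} {c : G.Walk u u} (hc : c.IsHamiltonianCycle) :
    ∃ f : ZMod (Fintype.card V) → V, Injective f ∧ ∀ i, G.Adj (f i) (f (i + 1)) := by
  have hlen := hc.length_eq
  have h3 := hc.isCycle.three_le_length
  have : NeZero (Fintype.card V) := ⟨by omega⟩
  have hval : ∀ i : ZMod (Fintype.card V), i.val < c.length := fun i => hlen.symm ▸ ZMod.val_lt i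
  have hwrap : ∀ m ≤ c.length, c.getVert (m % Fintype.card V) = c.getVert m := fun m hm => by
    rw [← hlen]
    rcases hm.lt_or_eq with hm | rfl
    · rw [Nat.mod_eq_of_lt hm]
    · rw [Nat.mod_self, c.getVert_zero, c.getVert_length]
  refine ⟨fun i => c.getVert i.val,
    fun i j h => ZMod.val_injective _ (hc.isCycle.getVert_injOn' ?_ ?_ h), fun i => ?_⟩
  · simpa using Nat.le_sub_one_of_lt (hval i)
  · simpa using Nat.le_sub_one_of_lt (hval j)
  · dsimp only
    rw [ZMod.val_add, ZMod.val_one'' (by omega), hwrap _ (hval i)]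
    exact c.adj_getVert_succ (hval i)

/-- If `G` has order `n ≥ max(k,3)` and contains a Hamiltonian cycle, then
`ν_k(G) = ⌊n/k⌋` and `τ_k(G) ≥ ⌈n/k⌉`. -/
theorem stmt8 {V : Type*} [Fintype V] [DecidableEq V] (k : ℕ) (hk : 0 < k) (G : SimpleGraph V)
    (hn : max k 3 ≤ Fintype.card V)
    (u : V) (c : G.Walk u u) (hc : c.IsHamiltonianCycle) :
    nuK k G = Fintype.card V / k ∧
      (Fintype.card V + k - 1) / k ≤ tauK k G := by
  obtain ⟨f, hf, hadj⟩ := hc.exists_cyclic_labeling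
  have hkn : k ≤ Fintype.card V := le_of_max_le_left hn
  have : NeZero (Fintype.card V) := ⟨by omega⟩
  refine ⟨le_antisymm ?_ (div_le_nuK_of_cyclic hf hadj hk hkn), le_tauK fun X hX => ?_⟩
  · simpa using nuK_le_card_div (G := G) hk
  · rw [← Nat.ceilDiv_eq_add_pred_div, ceilDiv_le_iff_le_smul hk, smul_eq_mul]
    exact card_le_mul_card_of_isKVertexCover hf hadj hk hkn hX
end

section
/- Let G be a graph in 𝒢_4 and let a, b, c, d be four pairwise adjacent vertices of G (so {a,b,c,d} spans a K_4). Then at most one of the vertices a, b, c, d has a neighbor in V(G) ∖ {a, b, c, d}. -/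
open SimpleGraph

lemma pathSupport_mk {W : Type*} (H : SimpleGraph W) {p q r t : W}
    (hpq : H.Adj p q) (hqr : H.Adj q r) (hrt : H.Adj r t)
    (hpr : p ≠ r) (hpt : p ≠ t) (hqt : q ≠ t) :
    IsPathSupport 4 H ({p, q, r, t} : Set W) := by
  refine ⟨p, t, .cons hpq (.cons hqr (.cons hrt .nil)), ?_, by simp, ?_⟩
  · rw [Walk.isPath_def]
    simp [hpq.ne, hqr.ne, hrt.ne, hpr, hpt, hqt]
  · ext z
    simp [or_assoc]

lemma pathSupport_ncard {W : Type*} {H : SimpleGraph W} {S : Set W}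
    (h : IsPathSupport 4 H S) : S.ncard = 4 := by
  classical
  obtain ⟨u, v, p, hp, hlen, rfl⟩ := h
  have he : {x | x ∈ p.support} = ↑p.support.toFinset := by ext z; simp
  rw [he, Set.ncard_coe_finset, List.toFinset_card_of_nodup hp.support_nodup, hlen]

lemma avoid {W : Type*} {H : SimpleGraph W} {X : Finset W} {v : W} (hX : X = {v})
    (hcov : IsKVertexCover 4 H X) {p q r t : W}
    (hS : IsPathSupport 4 H ({p, q, r, t} : Set W))
    (h1 : v ≠ p) (h2 : v ≠ q) (h3 : v ≠ r) (h4 : v ≠ t) : False := by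
  obtain ⟨x, hxX, hxS⟩ := hcov _ hS
  rw [hX, Finset.mem_singleton] at hxX
  subst hxX
  simp only [Set.mem_insert_iff, Set.mem_singleton_iff] at hxS
  tauto

lemma key {V : Type*} [Fintype V] (G : SimpleGraph V) (hG : memGclass 4 G)
    (a b c d : V)
    (hab : G.Adj a b) (hac : G.Adj a c) (had : G.Adj a d)
    (hbc : G.Adj b c) (hbd : G.Adj b d) (hcd : G.Adj c d)
    (x' y' : V)
    (hx'a : x' ≠ a) (hx'b : x' ≠ b) (hx'c : x' ≠ c) (hx'd : x' ≠ d)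
    (hy'a : y' ≠ a) (hy'b : y' ≠ b) (hy'c : y' ≠ c) (hy'd : y' ≠ d)
    (hax' : G.Adj a x') (hby' : G.Adj b y') : False := by
  classical
  set s : Set V := {a, b, c, d, x', y'} with hs
  have ha : a ∈ s := by simp [hs]
  have hb : b ∈ s := by simp [hs]
  have hc : c ∈ s := by simp [hs]
  have hd : d ∈ s := by simp [hs]
  have hx's : x' ∈ s := by simp [hs]
  have hy's : y' ∈ s := by simp [hs]
  set H := G.induce s with hH
  set A : ↥s := ⟨a, ha⟩
  set B : ↥s := ⟨b, hb⟩
  set C : ↥s := ⟨c, hc⟩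
  set D : ↥s := ⟨d, hd⟩
  set X' : ↥s := ⟨x', hx's⟩
  set Y' : ↥s := ⟨y', hy's⟩
  -- adjacencies in H
  have hAB : H.Adj A B := hab
  have hAC : H.Adj A C := hac
  have hAD : H.Adj A D := had
  have hBC : H.Adj B C := hbc
  have hBD : H.Adj B D := hbd
  have hCD : H.Adj C D := hcd
  have hX'A : H.Adj X' A := hax'.symm
  have hY'B : H.Adj Y' B := hby'.symm
  -- inequalities between subtype elements
  have neAC : A ≠ C := Subtype.coe_ne_coe.mp hac.ne
  have neAD : A ≠ D := Subtype.coe_ne_coe.mp had.ne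
  have neBD : B ≠ D := Subtype.coe_ne_coe.mp hbd.ne
  have neAB : A ≠ B := Subtype.coe_ne_coe.mp hab.ne
  have neBC : B ≠ C := Subtype.coe_ne_coe.mp hbc.ne
  have neX'B : X' ≠ B := Subtype.coe_ne_coe.mp hx'b
  have neX'C : X' ≠ C := Subtype.coe_ne_coe.mp hx'c
  have neX'D : X' ≠ D := Subtype.coe_ne_coe.mp hx'd
  have neY'C : Y' ≠ C := Subtype.coe_ne_coe.mp hy'c
  have neY'D : Y' ≠ D := Subtype.coe_ne_coe.mp hy'd
  -- a 4-path in H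
  have hS0 : IsPathSupport 4 H ({X', A, C, D} : Set ↥s) :=
    pathSupport_mk H hX'A hAC hCD neX'C neX'D neAD
  -- the matching-number set
  set T : Set ℕ := {n | ∃ M : Finset (Set ↥s), (∀ S ∈ M, IsPathSupport 4 H S) ∧
    (↑M : Set (Set ↥s)).Pairwise Disjoint ∧ M.card = n} with hT
  have h1T : 1 ∈ T := by
    refine ⟨{({X', A, C, D} : Set ↥s)}, ?_, ?_, Finset.card_singleton _⟩
    · intro S hS
      rw [Finset.mem_singleton] at hS
      subst hS; exact hS0
    · simp
  have hcard_s : s.ncard ≤ 6 := by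
    calc s.ncard ≤ ({b, c, d, x', y'} : Set V).ncard + 1 := Set.ncard_insert_le _ _
    _ ≤ (({c, d, x', y'} : Set V).ncard + 1) + 1 := by
        have := Set.ncard_insert_le b ({c, d, x', y'} : Set V); omega
    _ ≤ ((({d, x', y'} : Set V).ncard + 1) + 1) + 1 := by
        have := Set.ncard_insert_le c ({d, x', y'} : Set V); omega
    _ ≤ (((({x', y'} : Set V).ncard + 1) + 1) + 1) + 1 := by
        have := Set.ncard_insert_le d ({x', y'} : Set V); omega
    _ ≤ ((((({y'} : Set V).ncard + 1) + 1) + 1) + 1) + 1 := by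
        have := Set.ncard_insert_le x' ({y'} : Set V); omega
    _ ≤ 6 := by rw [Set.ncard_singleton]
  have hbound : ∀ n ∈ T, n ≤ 1 := by
    rintro n ⟨M, hM, hdisj, rfl⟩
    by_contra hn
    push_neg at hn
    obtain ⟨S1, hS1, S2, hS2, hne⟩ := Finset.one_lt_card.mp hn
    have hd12 : Disjoint S1 S2 := hdisj hS1 hS2 hne
    have hc1 := pathSupport_ncard (hM S1 hS1)
    have hc2 := pathSupport_ncard (hM S2 hS2)
    have hu : (S1 ∪ S2).ncard = 8 := by
      rw [Set.ncard_union_eq hd12 (Set.toFinite _) (Set.toFinite _), hc1, hc2]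
    have hle : (S1 ∪ S2).ncard ≤ (Set.univ : Set ↥s).ncard :=
      Set.ncard_le_ncard (Set.subset_univ _) (Set.toFinite _)
    rw [Set.ncard_univ, Nat.card_coe_set_eq] at hle
    omega
  have hnu : nuK 4 H = 1 := by
    refine le_antisymm (csSup_le ⟨1, h1T⟩ hbound) (le_csSup ⟨1, hbound⟩ h1T)
  have htau : tauK 4 H = 1 := (hG s).symm.trans hnu
  set T' : Set ℕ := {n | ∃ X : Finset ↥s, IsKVertexCover 4 H X ∧ X.card = n} with hT'
  have hT'ne : T'.Nonempty := by
    by_contra hE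
    rw [Set.not_nonempty_iff_eq_empty] at hE
    have : tauK 4 H = 0 := by
      show sInf T' = 0
      rw [hE, Nat.sInf_empty]
    omega
  have h1T' : (1 : ℕ) ∈ T' := by
    have h := Nat.sInf_mem hT'ne
    rwa [show sInf T' = 1 from htau] at h
  obtain ⟨X, hXcov, hXcard⟩ := h1T'
  obtain ⟨v, hv⟩ := Finset.card_eq_one.mp hXcard
  have hvs : (v : V) ∈ s := v.2
  have nesub : ∀ (w : V) (hw : w ∈ s), (v : V) ≠ w → v ≠ (⟨w, hw⟩ : ↥s) :=
    fun w hw h hvw => h (by rw [hvw])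
  have hvs' : (v : V) = a ∨ (v : V) = b ∨ (v : V) = c ∨ (v : V) = d ∨
      (v : V) = x' ∨ (v : V) = y' := hvs
  rcases hvs' with he | he | he | he | he | he
  · -- v = a : path Y' B C D
    exact avoid hv hXcov (pathSupport_mk H hY'B hBC hCD neY'C neY'D neBD)
      (nesub _ _ (by rw [he]; exact hy'a.symm)) (nesub _ _ (by rw [he]; exact hab.ne))
      (nesub _ _ (by rw [he]; exact hac.ne)) (nesub _ _ (by rw [he]; exact had.ne))
  · -- v = b : path X' A C D
    exact avoid hv hXcov hS0
      (nesub _ _ (by rw [he]; exact hx'b.symm)) (nesub _ _ (by rw [he]; exact hab.ne.symm))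
      (nesub _ _ (by rw [he]; exact hbc.ne)) (nesub _ _ (by rw [he]; exact hbd.ne))
  · -- v = c : path X' A B D
    exact avoid hv hXcov (pathSupport_mk H hX'A hAB hBD neX'B neX'D neAD)
      (nesub _ _ (by rw [he]; exact hx'c.symm)) (nesub _ _ (by rw [he]; exact hac.ne.symm))
      (nesub _ _ (by rw [he]; exact hbc.ne.symm)) (nesub _ _ (by rw [he]; exact hcd.ne))
  · -- v = d : path X' A B C
    exact avoid hv hXcov (pathSupport_mk H hX'A hAB hBC neX'B neX'C neAC)
      (nesub _ _ (by rw [he]; exact hx'd.symm)) (nesub _ _ (by rw [he]; exact had.ne.symm))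
      (nesub _ _ (by rw [he]; exact hbd.ne.symm)) (nesub _ _ (by rw [he]; exact hcd.ne.symm))
  · -- v = x' : path A B C D
    exact avoid hv hXcov (pathSupport_mk H hAB hBC hCD neAC neAD neBD)
      (nesub _ _ (by rw [he]; exact hx'a)) (nesub _ _ (by rw [he]; exact hx'b))
      (nesub _ _ (by rw [he]; exact hx'c)) (nesub _ _ (by rw [he]; exact hx'd))
  · -- v = y' : path A B C D
    exact avoid hv hXcov (pathSupport_mk H hAB hBC hCD neAC neAD neBD)
      (nesub _ _ (by rw [he]; exact hy'a)) (nesub _ _ (by rw [he]; exact hy'b))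
      (nesub _ _ (by rw [he]; exact hy'c)) (nesub _ _ (by rw [he]; exact hy'd))

/-- If `G ∈ 𝒢₄` and `a, b, c, d` are four pairwise adjacent vertices of `G`, then
at most one of them has a neighbor outside of `{a, b, c, d}`. -/
theorem stmt15 {V : Type*} [Fintype V] (G : SimpleGraph V) (hG : memGclass 4 G)
    (a b c d : V)
    (hab : G.Adj a b) (hac : G.Adj a c) (had : G.Adj a d)
    (hbc : G.Adj b c) (hbd : G.Adj b d) (hcd : G.Adj c d) :
    ∀ x ∈ ({a, b, c, d} : Set V), ∀ y ∈ ({a, b, c, d} : Set V),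
      (∃ x', x' ∉ ({a, b, c, d} : Set V) ∧ G.Adj x x') →
      (∃ y', y' ∉ ({a, b, c, d} : Set V) ∧ G.Adj y y') → x = y := by
  rintro x hx y hy ⟨x', hx'm, hxx'⟩ ⟨y', hy'm, hyy'⟩
  simp only [Set.mem_insert_iff, Set.mem_singleton_iff, not_or] at hx'm hy'm
  obtain ⟨hx'a, hx'b, hx'c, hx'd⟩ := hx'm
  obtain ⟨hy'a, hy'b, hy'c, hy'd⟩ := hy'm
  by_contra hne
  simp only [Set.mem_insert_iff, Set.mem_singleton_iff] at hx hy
  rcases hx with rfl | rfl | rfl | rfl <;> rcases hy with rfl | rfl | rfl | rfl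
  · exact hne rfl
  · exact key G hG x y c d hab hac had hbc hbd hcd x' y'
      hx'a hx'b hx'c hx'd hy'a hy'b hy'c hy'd hxx' hyy'
  · exact key G hG x y b d hac hab had hbc.symm hcd hbd x' y'
      hx'a hx'c hx'b hx'd hy'a hy'c hy'b hy'd hxx' hyy'
  · exact key G hG x y b c had hab hac hbd.symm hcd.symm hbc x' y'
      hx'a hx'd hx'b hx'c hy'a hy'd hy'b hy'c hxx' hyy'
  · exact key G hG x y c d hab.symm hbc hbd hac had hcd x' y'
      hx'b hx'a hx'c hx'd hy'b hy'a hy'c hy'd hxx' hyy'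
  · exact hne rfl
  · exact key G hG x y a d hbc hab.symm hbd hac.symm hcd had x' y'
      hx'b hx'c hx'a hx'd hy'b hy'c hy'a hy'd hxx' hyy'
  · exact key G hG x y a c hbd hab.symm hbc had.symm hcd.symm hac x' y'
      hx'b hx'd hx'a hx'c hy'b hy'd hy'a hy'c hxx' hyy'
  · exact key G hG x y b d hac.symm hbc.symm hcd hab had hbd x' y'
      hx'c hx'a hx'b hx'd hy'c hy'a hy'b hy'd hxx' hyy'
  · exact key G hG x y a d hbc.symm hac.symm hcd hab.symm hbd had x' y'
      hx'c hx'b hx'a hx'd hy'c hy'b hy'a hy'd hxx' hyy'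
  · exact hne rfl
  · exact key G hG x y a b hcd hac.symm hbc.symm had.symm hbd.symm hab x' y'
      hx'c hx'd hx'a hx'b hy'c hy'd hy'a hy'b hxx' hyy'
  · exact key G hG x y b c had.symm hbd.symm hcd.symm hab hac hbc x' y'
      hx'd hx'a hx'b hx'c hy'd hy'a hy'b hy'c hxx' hyy'
  · exact key G hG x y a c hbd.symm had.symm hcd.symm hab.symm hbc hac x' y'
      hx'd hx'b hx'a hx'c hy'd hy'b hy'a hy'c hxx' hyy'
  · exact key G hG x y a b hcd.symm had.symm hbd.symm hac.symm hbc.symm hab x' y'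
      hx'd hx'c hx'a hx'b hy'd hy'c hy'a hy'b hxx' hyy'
  · exact hne rfl
end
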